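/- Let a, b, c, d, k, l be integers such that the matrix [[a,b],[c,d]] lies in GL(2,ℤ) and none of its complex eigenvalues is a root of unity. Let Γ be the group with presentation ⟨x, y, z, t | t x t⁻¹ = xᵃ yᶜ zᵏ, t y t⁻¹ = xᵇ yᵈ zˡ, t z t⁻¹ = z, [x,y] = z, x z = z x, y z = z y⟩. Then the group Hom(Γ, ℤ) of group homomorphisms from Γ to ℤ (under pointwise addition) is isomorphic to ℤ. -/
import Mathlib

/-- The relations of the presented group
`⟨x, y, z, t | t x t⁻¹ = xᵃ yᶜ zᵏ, t y t⁻¹ = xᵇ yᵈ zˡ, t z t⁻¹ = z, [x,y] = z,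
x z = z x, y z = z y⟩`, where the generators `x, y, z, t` are `0, 1, 2, 3 : Fin 4`. -/
def solFourOneRels (a b c d k l : ℤ) : Set (FreeGroup (Fin 4)) :=
  let x := FreeGroup.of (0 : Fin 4)
  let y := FreeGroup.of (1 : Fin 4)
  let z := FreeGroup.of (2 : Fin 4)
  let t := FreeGroup.of (3 : Fin 4)
  {t * x * t⁻¹ * (x ^ a * y ^ c * z ^ k)⁻¹,
   t * y * t⁻¹ * (x ^ b * y ^ d * z ^ l)⁻¹,
   t * z * t⁻¹ * z⁻¹,
   x * y * x⁻¹ * y⁻¹ * z⁻¹,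
   x * z * x⁻¹ * z⁻¹,
   y * z * y⁻¹ * z⁻¹}

private lemma solFour_zpow_apply {M G : Type*} [MulOneClass M] [CommGroup G]
    (f : M →* G) (n : ℤ) (x : M) : (f ^ n) x = f x ^ n := rfl

private lemma solFour_mk_of {a b c d k l : ℤ} (i : Fin 4) :
    PresentedGroup.mk (solFourOneRels a b c d k l) (FreeGroup.of i)
      = PresentedGroup.of i := rfl

/-- The relations are satisfied by `x, y, z ↦ 0`, `t ↦ 1` in `ℤ`. -/
private lemma solFour_lift_rels (a b c d k l : ℤ) : ∀ r ∈ solFourOneRels a b c d k l,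
    FreeGroup.lift (fun i : Fin 4 => if i = 3 then Multiplicative.ofAdd (1:ℤ) else 1) r = 1 := by
  intro r hr
  simp only [solFourOneRels, Set.mem_insert_iff, Set.mem_singleton_iff] at hr
  rcases hr with h|h|h|h|h|h <;> subst h <;>
    simp [map_mul, map_inv, map_zpow, FreeGroup.lift_apply_of]

/-- Any homomorphism to `ℤ` kills `x`, `y` and `z`. -/
private lemma solFour_gen_eq_one (a b c d k l : ℤ)
    (hD : (1 - a) * (1 - d) - b * c ≠ 0)
    (φ : PresentedGroup (solFourOneRels a b c d k l) →* Multiplicative ℤ) :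
    φ (.of 0) = 1 ∧ φ (.of 1) = 1 ∧ φ (.of 2) = 1 := by
  have key : ∀ r ∈ solFourOneRels a b c d k l,
      Multiplicative.toAdd (φ (PresentedGroup.mk (solFourOneRels a b c d k l) r)) = 0 := by
    intro r hr
    have h : PresentedGroup.mk (solFourOneRels a b c d k l) r = 1 :=
      (QuotientGroup.eq_one_iff r).mpr (Subgroup.subset_normalClosure hr)
    rw [h, map_one]
    rfl
  set u : ℤ := Multiplicative.toAdd (φ (.of 0)) with hu
  set v : ℤ := Multiplicative.toAdd (φ (.of 1)) with hv
  set w : ℤ := Multiplicative.toAdd (φ (.of 2)) with hw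
  have h1 := key (FreeGroup.of 3 * FreeGroup.of 0 * (FreeGroup.of 3)⁻¹ *
      (FreeGroup.of 0 ^ a * FreeGroup.of 1 ^ c * FreeGroup.of 2 ^ k)⁻¹)
    (by simp [solFourOneRels])
  have h2 := key (FreeGroup.of 3 * FreeGroup.of 1 * (FreeGroup.of 3)⁻¹ *
      (FreeGroup.of 0 ^ b * FreeGroup.of 1 ^ d * FreeGroup.of 2 ^ l)⁻¹)
    (by simp [solFourOneRels])
  have h4 := key (FreeGroup.of 0 * FreeGroup.of 1 * (FreeGroup.of 0)⁻¹ *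
      (FreeGroup.of 1)⁻¹ * (FreeGroup.of 2)⁻¹)
    (by simp [solFourOneRels])
  simp only [map_mul, map_inv, map_zpow, solFour_mk_of, toAdd_mul, toAdd_inv, toAdd_zpow,
    smul_eq_mul, ← hu, ← hv, ← hw] at h1 h2 h4
  have hw0 : w = 0 := by linarith
  have e1 : (1 - a) * u - c * v = 0 := by linear_combination h1 + k * hw0
  have e2 : -(b * u) + (1 - d) * v = 0 := by linear_combination h2 + l * hw0
  have hu0 : u = 0 := by
    have h : ((1 - a) * (1 - d) - b * c) * u = 0 := by
      linear_combination (1 - d) * e1 + c * e2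
    exact (mul_eq_zero.mp h).resolve_left hD
  have hv0 : v = 0 := by
    have h : ((1 - a) * (1 - d) - b * c) * v = 0 := by
      linear_combination b * e1 + (1 - a) * e2
    exact (mul_eq_zero.mp h).resolve_left hD
  refine ⟨?_, ?_, ?_⟩
  · rw [← ofAdd_toAdd (φ (.of 0)), ← hu, hu0]; rfl
  · rw [← ofAdd_toAdd (φ (.of 1)), ← hv, hv0]; rfl
  · rw [← ofAdd_toAdd (φ (.of 2)), ← hw, hw0]; rfl

/-- Let `a, b, c, d, k, l` be integers such that `[[a,b],[c,d]]` lies in `GL(2,ℤ)` and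
none of its complex eigenvalues is a root of unity. Then the group of homomorphisms
from `Γ = ⟨x, y, z, t | t x t⁻¹ = xᵃ yᶜ zᵏ, t y t⁻¹ = xᵇ yᵈ zˡ, t z t⁻¹ = z, [x,y] = z,
x z = z x, y z = z y⟩` to `ℤ` (under pointwise addition) is isomorphic to `ℤ`. -/
theorem homGroup_solFourOneGroup_iso_int (a b c d k l : ℤ)
    (hunit : IsUnit (!![a, b; c, d] : Matrix (Fin 2) (Fin 2) ℤ).det)
    (heig : ∀ z : ℂ,
      Polynomial.aeval z (Matrix.charpoly (!![a, b; c, d] : Matrix (Fin 2) (Fin 2) ℤ)) = 0 →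
      ∀ m : ℕ, 1 ≤ m → z ^ m ≠ 1) :
    Nonempty ((PresentedGroup (solFourOneRels a b c d k l) →* Multiplicative ℤ) ≃*
        Multiplicative ℤ) := by
  classical
  -- the determinant-like quantity `det (I - A) = (1-a)(1-d) - bc` is nonzero
  have hchar : (!![a, b; c, d] : Matrix (Fin 2) (Fin 2) ℤ).charpoly
      = (Polynomial.X - Polynomial.C a) * (Polynomial.X - Polynomial.C d)
        - Polynomial.C b * Polynomial.C c := by
    have h : Matrix.charmatrix (!![a, b; c, d] : Matrix (Fin 2) (Fin 2) ℤ)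
        = !![Polynomial.X - Polynomial.C a, -Polynomial.C b;
             -Polynomial.C c, Polynomial.X - Polynomial.C d] := by
      ext i j
      fin_cases i <;> fin_cases j <;>
        simp [Matrix.charmatrix_apply_eq, Matrix.charmatrix_apply_ne]
    rw [Matrix.charpoly, h, Matrix.det_fin_two_of]
    ring
  have hD : (1 - a) * (1 - d) - b * c ≠ 0 := by
    intro h
    refine heig 1 ?_ 1 le_rfl (one_pow 1)
    rw [hchar]
    have hc := congrArg (Int.cast : ℤ → ℂ) h
    push_cast at hc
    simp only [map_sub, map_mul, Polynomial.aeval_X, Polynomial.aeval_C]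
    simp only [eq_intCast]
    linear_combination hc
  set ψ : PresentedGroup (solFourOneRels a b c d k l) →* Multiplicative ℤ :=
    PresentedGroup.toGroup (solFour_lift_rels a b c d k l) with hψ
  have hψ3 : ψ (.of 3) = Multiplicative.ofAdd (1 : ℤ) := by
    rw [hψ, PresentedGroup.toGroup.of]
    simp
  have hψ0 : ψ (.of 0) = 1 := by rw [hψ, PresentedGroup.toGroup.of]; simp
  have hψ1 : ψ (.of 1) = 1 := by rw [hψ, PresentedGroup.toGroup.of]; simp
  have hψ2 : ψ (.of 2) = 1 := by rw [hψ, PresentedGroup.toGroup.of]; simp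
  refine ⟨MulEquiv.mk' ⟨fun φ => φ (.of 3), fun n => ψ ^ Multiplicative.toAdd n, ?_, ?_⟩
    fun φ₁ φ₂ => rfl⟩
  · intro φ
    obtain ⟨h0, h1, h2⟩ := solFour_gen_eq_one a b c d k l hD φ
    show ψ ^ Multiplicative.toAdd (φ (.of 3)) = φ
    ext i
    fin_cases i
    · show (ψ ^ Multiplicative.toAdd (φ (.of 3))) (.of 0) = φ (.of 0)
      rw [solFour_zpow_apply, hψ0, h0, one_zpow]
    · show (ψ ^ Multiplicative.toAdd (φ (.of 3))) (.of 1) = φ (.of 1)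
      rw [solFour_zpow_apply, hψ1, h1, one_zpow]
    · show (ψ ^ Multiplicative.toAdd (φ (.of 3))) (.of 2) = φ (.of 2)
      rw [solFour_zpow_apply, hψ2, h2, one_zpow]
    · show (ψ ^ Multiplicative.toAdd (φ (.of 3))) (.of 3) = φ (.of 3)
      rw [solFour_zpow_apply, hψ3]
      apply Multiplicative.toAdd.injective
      simp
  · intro n
    show (ψ ^ Multiplicative.toAdd n) (.of 3) = n
    rw [solFour_zpow_apply, hψ3]
    apply Multiplicative.toAdd.injective
    simp
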